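/- Let X be a nonempty type and F, J : X → [0,∞] maps into the extended nonnegative reals. Assume there is x₀ ∈ X with J(x₀) = 0 and 0 < M₀ < ∞, where M₀ := F(x₀). Extend φ (taken with this value of M₀) to [0,∞] by φ(∞) := ∞. Then x* ∈ X minimizes F + J over X if and only if x* minimizes F + φ∘J over X; in particular the two problems have the same set of minimizers. (Equivalence of the original problem (P) with the surrogate problem (P̃) used by the algorithm, where F is the fidelity term, J = J_{α,β} the regularizer and x₀ = 0.) -/

import Mathlib

open scoped ENNReal

/-!
Put `M₀ := F x₀`. A minimizer `x*` of either problem satisfies `F x* + J x* ≤ F x₀ + J x₀ = M₀`,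
so `J x*` lies in the range `J ≤ M₀` where `φ` is the identity. Since `φ(t) ≥ t` (AM-GM:
`t² + M₀² ≥ 2 t M₀`), the surrogate objective dominates the original one and agrees with it
where `J ≤ M₀`; a point with `J x > M₀` beats `x*` in neither problem because `F ≥ 0`.
-/

/-- The surrogate function `φ`, extended to `[0,∞]` by `φ(∞) := ∞`:
`φ(t) = t` for `t ≤ M₀` and `φ(t) = (t² + M₀²)/(2M₀)` for `t > M₀`. -/
noncomputable def phiExt (M₀ : ℝ≥0∞) (t : ℝ≥0∞) : ℝ≥0∞ :=
  if t ≤ M₀ then t else (t ^ 2 + M₀ ^ 2) / (2 * M₀)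

section Minimizers

variable {α X : Type*} [AddCommMonoid α] [LinearOrder α] [IsOrderedAddMonoid α]
  [CanonicallyOrderedAdd α] {F J : X → α} {ψ : α → α} {M : α} {x₀ : X}

theorem le_of_minimizer_add_comp (hψ : ∀ t, t ≤ ψ t) (hψM : ∀ t ≤ M, ψ t = t)
    (hx₀ : F x₀ + J x₀ ≤ M) {xstar : X} (hmin : ∀ x, F xstar + ψ (J xstar) ≤ F x + ψ (J x)) :
    F xstar + J xstar ≤ M :=
  calc F xstar + J xstar ≤ F xstar + ψ (J xstar) := add_le_add_right (hψ _) _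
    _ ≤ F x₀ + ψ (J x₀) := hmin x₀
    _ = F x₀ + J x₀ := by rw [hψM _ (le_add_self.trans hx₀)]
    _ ≤ M := hx₀

theorem minimizer_add_iff_minimizer_add_comp (hψ : ∀ t, t ≤ ψ t) (hψM : ∀ t ≤ M, ψ t = t)
    (hx₀ : F x₀ + J x₀ ≤ M) (xstar : X) :
    (∀ x, F xstar + J xstar ≤ F x + J x) ↔
      (∀ x, F xstar + ψ (J xstar) ≤ F x + ψ (J x)) := by
  constructor
  · intro hmin x
    have hJ : J xstar ≤ M := le_add_self.trans ((hmin x₀).trans hx₀)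
    rw [hψM _ hJ]
    exact (hmin x).trans (add_le_add_right (hψ _) _)
  · intro hmin x
    have hlevel := le_of_minimizer_add_comp hψ hψM hx₀ hmin
    rcases le_or_gt (J x) M with hJx | hJx
    · have := hmin x
      rwa [hψM _ (le_add_self.trans hlevel), hψM _ hJx] at this
    · exact hlevel.trans (hJx.le.trans le_add_self)

end Minimizers

theorem ENNReal.two_mul_le_add_sq (a b : ℝ≥0∞) : 2 * a * b ≤ a ^ 2 + b ^ 2 := by
  rcases eq_or_ne a ⊤ with rfl | ha
  · simp [pow_two]
  rcases eq_or_ne b ⊤ with rfl | hb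
  · simp [pow_two]
  lift a to NNReal using ha
  lift b to NNReal using hb
  exact_mod_cast _root_.two_mul_le_add_sq a b

theorem phiExt_of_le {M₀ t : ℝ≥0∞} (h : t ≤ M₀) : phiExt M₀ t = t := if_pos h

-- No condition on `M₀`: for `M₀ = 0` the quotient is `t² / 0 = ⊤` in `ℝ≥0∞`.
theorem le_phiExt (M₀ t : ℝ≥0∞) : t ≤ phiExt M₀ t := by
  unfold phiExt
  split_ifs with h
  · exact le_rfl
  · replace h := not_le.mp h
    have ht : t ^ 2 + M₀ ^ 2 ≠ 0 := by simp [(pos_of_gt h).ne']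
    have hM : 2 * M₀ ≠ ⊤ := ENNReal.mul_ne_top (by simp) h.ne_top
    rw [ENNReal.le_div_iff_mul_le (Or.inr ht) (Or.inl hM), ← mul_assoc, mul_comm t]
    exact ENNReal.two_mul_le_add_sq t M₀

theorem surrogate_problem_equivalence_general
    {X : Type*} (F J : X → ℝ≥0∞) (x₀ : X)
    (hJ0 : J x₀ = 0) (xstar : X) :
    (∀ x, F xstar + J xstar ≤ F x + J x) ↔
    (∀ x, F xstar + phiExt (F x₀) (J xstar) ≤ F x + phiExt (F x₀) (J x)) :=
  minimizer_add_iff_minimizer_add_comp (le_phiExt _) (fun _ ↦ phiExt_of_le)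
    (by rw [hJ0, add_zero]) xstar

/-- Equivalence of the original problem (P) and the surrogate problem (P̃): with
`M₀ := F(x₀)` where `J(x₀) = 0` and `0 < M₀ < ∞`, a point `x*` minimizes `F + J` iff it
minimizes `F + φ∘J`; in particular the two problems share the same minimizers. -/
theorem surrogate_problem_equivalence
    {X : Type*} [Nonempty X] (F J : X → ℝ≥0∞) (x₀ : X)
    (hJ0 : J x₀ = 0) (hM0pos : 0 < F x₀) (hM0fin : F x₀ < ⊤) (xstar : X) :
    (∀ x, F xstar + J xstar ≤ F x + J x) ↔
    (∀ x, F xstar + phiExt (F x₀) (J xstar) ≤ F x + phiExt (F x₀) (J x)) :=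
  surrogate_problem_equivalence_general F J x₀ hJ0 xstar
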